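/- Every Legendrian knot Λ in (ℝ³, ξ_std) admits, for each nonnegative integer n, a Legendrian representative S₊ⁿ(S₋ⁿ(Λ)) with tb = tb(Λ) − 2n and r = r(Λ), and (by the Sabloff–Vela-Vick–Wong construction iterated n times) there is an exact Lagrangian cobordism of genus n and Euler characteristic −2n from S₊ⁿ(S₋ⁿ(Λ)) to Λ. -/
import Mathlib

/-!
Iterated Sabloff–Vela-Vick–Wong cobordisms: for every Legendrian knot `Λ` in
`(ℝ³, ξ_std)` and every `n ≥ 0`, the representative `S₊ⁿ(S₋ⁿ(Λ))` satisfies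
`tb = tb(Λ) - 2n` and `r = r(Λ)`, and there is an exact Lagrangian cobordism
of genus `n` and Euler characteristic `-2n` from `S₊ⁿ(S₋ⁿ(Λ))` to `Λ`.
We state this over an interface: `ExactLagCob Λ₋ Λ₊ χ g` asserts the
existence of an exact Lagrangian cobordism from `Λ₋` to `Λ₊` with Euler
characteristic `χ` and genus `g`; the hypotheses record the stabilization
formulas, the fact that `S₊` and `S₋` commute, trivial cobordisms, stacking
of cobordisms, and the SVW genus-one cobordism from `S₊(S₋(Λ))` to `Λ`.
-/
theorem iterated_svw_cobordism
    {Leg : Type*} (tb r : Leg → ℤ) (Spos Sneg : Leg → Leg)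
    (ExactLagCob : Leg → Leg → ℤ → ℕ → Prop)
    (htb_pos : ∀ Λ, tb (Spos Λ) = tb Λ - 1)
    (hr_pos : ∀ Λ, r (Spos Λ) = r Λ + 1)
    (htb_neg : ∀ Λ, tb (Sneg Λ) = tb Λ - 1)
    (hr_neg : ∀ Λ, r (Sneg Λ) = r Λ - 1)
    (hcomm : ∀ Λ, Spos (Sneg Λ) = Sneg (Spos Λ))
    (htriv : ∀ Λ, ExactLagCob Λ Λ 0 0)
    (hstack : ∀ Λ₁ Λ₂ Λ₃ χ₁ χ₂ g₁ g₂, ExactLagCob Λ₁ Λ₂ χ₁ g₁ →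
      ExactLagCob Λ₂ Λ₃ χ₂ g₂ → ExactLagCob Λ₁ Λ₃ (χ₁ + χ₂) (g₁ + g₂))
    (hSVW : ∀ Λ, ExactLagCob (Spos (Sneg Λ)) Λ (-2) 1)
    (Λ : Leg) (n : ℕ) :
    tb (Spos^[n] (Sneg^[n] Λ)) = tb Λ - 2 * n ∧
    r (Spos^[n] (Sneg^[n] Λ)) = r Λ ∧
    ExactLagCob (Spos^[n] (Sneg^[n] Λ)) Λ (-2 * n) n := by
  have comm_iter : ∀ (m : ℕ) (X : Leg), Sneg (Spos^[m] X) = Spos^[m] (Sneg X) := by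
    intro m
    induction m with
    | zero => intro X; simp
    | succ k ih =>
      intro X
      rw [Function.iterate_succ_apply', Function.iterate_succ_apply', ← hcomm, ih]
  induction n with
  | zero => simpa using htriv Λ
  | succ k ih =>
    obtain ⟨htb, hr, hcob⟩ := ih
    have key : Spos^[k+1] (Sneg^[k+1] Λ) = Spos (Sneg (Spos^[k] (Sneg^[k] Λ))) := by
      rw [Function.iterate_succ_apply' Sneg, Function.iterate_succ_apply' Spos,
        comm_iter k]
    refine ⟨?_, ?_, ?_⟩
    · rw [key, htb_pos, htb_neg, htb]; push_cast; ring
    · rw [key, hr_pos, hr_neg, hr]; ring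
    · rw [key]
      have := hstack _ _ _ (-2) (-2 * k) 1 k (hSVW _) hcob
      have hχ : (-2 : ℤ) + -2 * k = -2 * (k + 1 : ℕ) := by push_cast; ring
      rw [hχ] at this
      simpa [add_comm] using this
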